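/- Triangle identity and comparability g̃ ≈ g for non-grazing collisions (equation (2.68) and Lemma 2.10): Let p, q ∈ ℝ³ with p + q ≠ 0 and p ≠ q, let ω ∈ 𝕊², and let p', q' be the post-collisional momenta of the center-of-momentum parametrization. Set g := √(2(p⁰q⁰ − p·q − 1)), g̃ := √(2(p'⁰q⁰ − p'·q − 1)), ḡ := √(2(p'⁰p⁰ − p'·p − 1)), and define the scattering angle by cosθ := (−(p⁰−q⁰)(p'⁰−q'⁰) + (p−q)·(p'−q'))/g². Then g² = g̃² + ḡ², cosθ = 1 − 2ḡ²/g², and if cosθ ≥ 0 then g̃² ≤ g² ≤ 2 g̃². -/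

import Mathlib

open scoped InnerProductSpace

noncomputable section

/-- Momentum space ℝ³ with the Euclidean structure. -/
abbrev E3 : Type := EuclideanSpace ℝ (Fin 3)

/-- The relativistic energy `p⁰ = √(1+|p|²)`. -/
def en (p : E3) : ℝ := Real.sqrt (1 + ‖p‖ ^ 2)

/-- The relative momentum `g(p,q) = √(2(p⁰q⁰ − p·q − 1))`. -/
def relg (p q : E3) : ℝ := Real.sqrt (2 * (en p * en q - ⟪p, q⟫_ℝ - 1))

/-- `s = g² + 4`. -/
def srel (p q : E3) : ℝ := relg p q ^ 2 + 4

/-- The post-collisional momentum `p'` in the center-of-momentum parametrization. -/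
def pPost (p q ω : E3) : E3 :=
  (2 : ℝ)⁻¹ • (p + q) + (relg p q / 2) •
    (ω + (((en p + en q) / Real.sqrt (srel p q) - 1) *
      (⟪p + q, ω⟫_ℝ / ‖p + q‖ ^ 2)) • (p + q))

/-- The post-collisional momentum `q' = p + q − p'`. -/
def qPost (p q ω : E3) : E3 := p + q - pPost p q ω

/-- The cosine of the scattering angle. -/
def cosTheta (p q ω : E3) : ℝ :=
  (-((en p - en q) * (en (pPost p q ω) - en (qPost p q ω))) +
    ⟪p - q, pPost p q ω - qPost p q ω⟫_ℝ) / relg p q ^ 2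

/-- The cross product on ℝ³ (transported to the Euclidean space structure). -/
def cross3 (p q : E3) : E3 :=
  (EuclideanSpace.equiv (Fin 3) ℝ).symm
    (crossProduct ((EuclideanSpace.equiv (Fin 3) ℝ) p) ((EuclideanSpace.equiv (Fin 3) ℝ) q))

/-!
Write `P = (p⁰, p)` and `P · Q = p⁰ q⁰ - p · q` (Minkowski product), so that `P · P = 1` and
`g(p, q)² = 2 (P · Q - 1)`. The momentum `p'` is the boost of `(√s / 2, (g / 2) ω)` out of the
centre-of-momentum frame, so `p'⁰ = (p⁰ + q⁰) / 2 + g (p + q) · ω / (2 √s)`, energy is conserved,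
`q'` is `p'` with `ω` replaced by `-ω`, and `P' · (P + Q) = s / 2`. Hence
`g̃² + ḡ² = 2 P' · (P + Q) - 4 = s - 4 = g²`. Since `Q' = P + Q - P'`, the numerator of `cos θ` is
`-(P - Q) · (2 P' - P - Q) = 2 (Q · P' - P · P') = g̃² - ḡ²`, which gives `cos θ = 1 - 2 ḡ² / g²`.
Finally `cos θ ≥ 0` means `2 ḡ² ≤ g²`, and the triangle identity yields `g̃² ≤ g² ≤ 2 g̃²`.
-/

section Boost

variable {V : Type*} [NormedAddCommGroup V] [InnerProductSpace ℝ V]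

-- The vector below is the boost of the unit-mass four-vector `(r / 2, (g / 2) ω)` out of the rest
-- frame of `(E, P)`, a four-vector of mass `r`.
lemma one_add_norm_sq_boost {P ω : V} (hω : ‖ω‖ = 1) {E r g : ℝ} (hr : 0 < r) (hEr : 0 < E + r)
    (hP : ‖P‖ ^ 2 = E ^ 2 - r ^ 2) (hg : g ^ 2 = r ^ 2 - 4) :
    1 + ‖(2⁻¹ + g * ⟪P, ω⟫_ℝ / (2 * r * (E + r))) • P + (g / 2) • ω‖ ^ 2 =
      (E / 2 + g * ⟪P, ω⟫_ℝ / (2 * r)) ^ 2 := by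
  rw [norm_add_sq_real, norm_smul, norm_smul, real_inner_smul_left, real_inner_smul_right, hω,
    mul_pow, mul_pow, Real.norm_eq_abs, Real.norm_eq_abs, sq_abs, sq_abs, hP]
  have := hEr.ne'
  field_simp
  linear_combination (r ^ 2 * (E + r) ^ 2) * hg

lemma boost_energy_nonneg {P ω : V} (hω : ‖ω‖ = 1) {E r g : ℝ} (hE : 0 ≤ E) (hr : 0 < r)
    (hP : ‖P‖ ^ 2 = E ^ 2 - r ^ 2) (hg : g ^ 2 = r ^ 2 - 4) :
    0 ≤ E / 2 + g * ⟪P, ω⟫_ℝ / (2 * r) := by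
  have hPω : ⟪P, ω⟫_ℝ ^ 2 ≤ ‖P‖ ^ 2 := by
    simpa [hω, sq_abs] using pow_le_pow_left₀ (abs_nonneg _) (abs_real_inner_le_norm P ω) 2
  have hsq : (g * ⟪P, ω⟫_ℝ) ^ 2 ≤ (r * E) ^ 2 := by
    rw [mul_pow, mul_pow]
    nlinarith [mul_le_mul_of_nonneg_left hPω (sq_nonneg g), pow_pos hr 4]
  have := (abs_le_of_sq_le_sq' hsq (by positivity)).1
  rw [div_add_div _ _ two_ne_zero (by positivity)]
  exact div_nonneg (by linarith) (by positivity)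

end Boost

lemma en_sq (p : E3) : en p ^ 2 = 1 + ‖p‖ ^ 2 :=
  Real.sq_sqrt (by positivity)

lemma en_pos (p : E3) : 0 < en p :=
  Real.sqrt_pos.2 (by positivity)

lemma sq_one_add_inner_add_norm_sub_sq_le (p q : E3) :
    (1 + ⟪p, q⟫_ℝ) ^ 2 + ‖p - q‖ ^ 2 ≤ (en p * en q) ^ 2 := by
  have hcs : ⟪p, q⟫_ℝ ^ 2 ≤ ‖p‖ ^ 2 * ‖q‖ ^ 2 := by
    simpa [sq_abs, mul_pow] using pow_le_pow_left₀ (abs_nonneg _) (abs_real_inner_le_norm p q) 2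
  rw [mul_pow, en_sq, en_sq, norm_sub_sq_real]
  linarith

lemma one_le_en_mul_en_sub_inner (p q : E3) : 1 ≤ en p * en q - ⟪p, q⟫_ℝ := by
  have hsq : (1 + ⟪p, q⟫_ℝ) ^ 2 ≤ (en p * en q) ^ 2 := by
    linarith [sq_one_add_inner_add_norm_sub_sq_le p q, sq_nonneg ‖p - q‖]
  linarith [(abs_le_of_sq_le_sq' hsq (mul_pos (en_pos p) (en_pos q)).le).2]

lemma one_lt_en_mul_en_sub_inner {p q : E3} (hne : p ≠ q) : 1 < en p * en q - ⟪p, q⟫_ℝ := by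
  have hsq : (1 + ⟪p, q⟫_ℝ) ^ 2 < (en p * en q) ^ 2 := by
    linarith [sq_one_add_inner_add_norm_sub_sq_le p q,
      pow_pos (norm_pos_iff.2 (sub_ne_zero.2 hne)) 2]
  linarith [abs_lt_of_sq_lt_sq hsq (mul_pos (en_pos p) (en_pos q)).le,
    le_abs_self (1 + ⟪p, q⟫_ℝ)]

lemma relg_sq (p q : E3) : relg p q ^ 2 = 2 * (en p * en q - ⟪p, q⟫_ℝ - 1) :=
  Real.sq_sqrt (by linarith [one_le_en_mul_en_sub_inner p q])

lemma relg_sq_pos {p q : E3} (hne : p ≠ q) : 0 < relg p q ^ 2 := by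
  rw [relg_sq]; linarith [one_lt_en_mul_en_sub_inner hne]

lemma sqrt_srel_sq (p q : E3) : Real.sqrt (srel p q) ^ 2 = relg p q ^ 2 + 4 :=
  Real.sq_sqrt (by unfold srel; positivity)

lemma sqrt_srel_pos (p q : E3) : 0 < Real.sqrt (srel p q) :=
  Real.sqrt_pos.2 (by unfold srel; positivity)

lemma norm_add_sq_eq_sq_sub_sqrt_srel_sq (p q : E3) :
    ‖p + q‖ ^ 2 = (en p + en q) ^ 2 - Real.sqrt (srel p q) ^ 2 := by
  rw [sqrt_srel_sq, relg_sq, norm_add_sq_real]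
  linear_combination -en_sq p - en_sq q

-- As `|p + q|² = (p⁰ + q⁰)² - s`, the coefficient `(ξ - 1) / |p + q|²` equals
-- `1 / (√s (p⁰ + q⁰ + √s))`; in this form the formula also holds when `p + q = 0`.
lemma pPost_eq (p q ω : E3) :
    pPost p q ω = (2⁻¹ + relg p q * ⟪p + q, ω⟫_ℝ /
      (2 * Real.sqrt (srel p q) * (en p + en q + Real.sqrt (srel p q)))) • (p + q) +
      (relg p q / 2) • ω := by
  rcases eq_or_ne (p + q) 0 with hP | hP
  · simp [pPost, hP]
  have hr := (sqrt_srel_pos p q).ne'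
  have hEr : en p + en q + Real.sqrt (srel p q) ≠ 0 := by
    linarith [en_pos p, en_pos q, sqrt_srel_pos p q]
  have hEr' : en p + en q - Real.sqrt (srel p q) ≠ 0 := by
    have h := norm_add_sq_eq_sq_sub_sqrt_srel_sq p q
    rw [sq_sub_sq] at h
    exact right_ne_zero_of_mul (h ▸ pow_ne_zero 2 (norm_ne_zero_iff.2 hP))
  rw [pPost, norm_add_sq_eq_sq_sub_sqrt_srel_sq, sq_sub_sq]
  match_scalars <;> field_simp

lemma qPost_eq_pPost_neg (p q ω : E3) : qPost p q ω = pPost p q (-ω) := by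
  rw [qPost, pPost_eq, pPost_eq, inner_neg_right]
  module

lemma en_pPost (p q : E3) {ω : E3} (hω : ‖ω‖ = 1) :
    en (pPost p q ω) =
      (en p + en q) / 2 + relg p q * ⟪p + q, ω⟫_ℝ / (2 * Real.sqrt (srel p q)) := by
  have hP := norm_add_sq_eq_sq_sub_sqrt_srel_sq p q
  have hg : relg p q ^ 2 = Real.sqrt (srel p q) ^ 2 - 4 := by rw [sqrt_srel_sq]; ring
  have hE : 0 < en p + en q := add_pos (en_pos p) (en_pos q)
  have hr := sqrt_srel_pos p q
  rw [en, pPost_eq, one_add_norm_sq_boost hω hr (by linarith) hP hg,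
    Real.sqrt_sq (boost_energy_nonneg hω hE.le hr hP hg)]

lemma en_pPost_add_en_qPost (p q : E3) {ω : E3} (hω : ‖ω‖ = 1) :
    en (pPost p q ω) + en (qPost p q ω) = en p + en q := by
  rw [qPost_eq_pPost_neg, en_pPost p q hω, en_pPost p q (by rwa [norm_neg]), inner_neg_right]
  ring

lemma en_pPost_mul_sub_inner (p q : E3) {ω : E3} (hω : ‖ω‖ = 1) :
    en (pPost p q ω) * (en p + en q) - ⟪pPost p q ω, p + q⟫_ℝ = srel p q / 2 := by
  have hP := norm_add_sq_eq_sq_sub_sqrt_srel_sq p q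
  have hr := (sqrt_srel_pos p q).ne'
  have hEr : en p + en q + Real.sqrt (srel p q) ≠ 0 := by
    linarith [en_pos p, en_pos q, sqrt_srel_pos p q]
  rw [en_pPost p q hω, pPost_eq]
  set a := ⟪p + q, ω⟫_ℝ with ha
  set r := Real.sqrt (srel p q)
  rw [inner_add_left, real_inner_smul_left, real_inner_smul_left, real_inner_self_eq_norm_sq,
    real_inner_comm (p + q) ω, ← ha, hP]
  have hs : srel p q = r ^ 2 := by rw [sqrt_srel_sq]; rfl
  rw [hs]
  field_simp
  ring

lemma relg_sq_eq_relg_pPost_sq_add (p q : E3) {ω : E3} (hω : ‖ω‖ = 1) :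
    relg p q ^ 2 = relg (pPost p q ω) q ^ 2 + relg (pPost p q ω) p ^ 2 := by
  have h := en_pPost_mul_sub_inner p q hω
  rw [inner_add_right, srel] at h
  rw [relg_sq (pPost p q ω) q, relg_sq (pPost p q ω) p]
  linear_combination (-2) * h

lemma cosTheta_numerator_eq (p q : E3) {ω : E3} (hω : ‖ω‖ = 1) :
    -((en p - en q) * (en (pPost p q ω) - en (qPost p q ω))) +
      ⟪p - q, pPost p q ω - qPost p q ω⟫_ℝ =
      relg (pPost p q ω) q ^ 2 - relg (pPost p q ω) p ^ 2 := by
  have hq' : en (qPost p q ω) = en p + en q - en (pPost p q ω) := by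
    linarith [en_pPost_add_en_qPost p q hω]
  rw [hq', relg_sq (pPost p q ω) q, relg_sq (pPost p q ω) p, qPost]
  simp only [inner_sub_left, inner_sub_right, inner_add_right, real_inner_self_eq_norm_sq,
    real_inner_comm (pPost p q ω)]
  linear_combination en_sq p - en_sq q - real_inner_comm q p

lemma cosTheta_eq {p q : E3} (hne : p ≠ q) {ω : E3} (hω : ‖ω‖ = 1) :
    cosTheta p q ω = 1 - 2 * relg (pPost p q ω) p ^ 2 / relg p q ^ 2 := by
  have hg : relg p q ≠ 0 := (pow_ne_zero_iff two_ne_zero).mp (relg_sq_pos hne).ne'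
  rw [cosTheta, cosTheta_numerator_eq p q hω]
  field_simp
  linear_combination -relg_sq_eq_relg_pPost_sq_add p q hω

theorem triangle_identity_and_comparability_general (p q ω : E3)
    (hne : p ≠ q) (hω : ‖ω‖ = 1) :
    relg p q ^ 2 = relg (pPost p q ω) q ^ 2 + relg (pPost p q ω) p ^ 2 ∧
    cosTheta p q ω = 1 - 2 * relg (pPost p q ω) p ^ 2 / relg p q ^ 2 ∧
    (0 ≤ cosTheta p q ω →
      relg (pPost p q ω) q ^ 2 ≤ relg p q ^ 2 ∧
        relg p q ^ 2 ≤ 2 * relg (pPost p q ω) q ^ 2) := by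
  have htri := relg_sq_eq_relg_pPost_sq_add p q hω
  have hcos := cosTheta_eq hne hω
  refine ⟨htri, hcos, fun hnonneg => ?_⟩
  have hbar : 2 * relg (pPost p q ω) p ^ 2 ≤ relg p q ^ 2 := by
    rw [hcos, sub_nonneg, div_le_one (relg_sq_pos hne)] at hnonneg
    exact hnonneg
  constructor <;> linarith [sq_nonneg (relg (pPost p q ω) p)]

/-- **Triangle identity and comparability `g̃ ≈ g` for non-grazing collisions**
(equation (2.68) and Lemma 2.10). -/
theorem triangle_identity_and_comparability (p q ω : E3)
    (hpq : p + q ≠ 0) (hne : p ≠ q) (hω : ‖ω‖ = 1) :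
    relg p q ^ 2 = relg (pPost p q ω) q ^ 2 + relg (pPost p q ω) p ^ 2 ∧
    cosTheta p q ω = 1 - 2 * relg (pPost p q ω) p ^ 2 / relg p q ^ 2 ∧
    (0 ≤ cosTheta p q ω →
      relg (pPost p q ω) q ^ 2 ≤ relg p q ^ 2 ∧
        relg p q ^ 2 ≤ 2 * relg (pPost p q ω) q ^ 2) :=
  triangle_identity_and_comparability_general p q ω hne hω
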